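/- arXiv:1411.2978 — 3 statements merged into one kernel-verified Lean document; each statement's English description precedes it below -/
import Mathlib

section
/- Let D be a contractive distance on two-qubit density matrices. Let c1, c3 ∈ [-1,1] and y ∈ [-1,1]. Then D(ρ(c1,-c1·c3,c3), ρ(0,0,c3)) ≤ D(ρ(c1,-c1·c3,c3), ρ(0,y,0)). That is, the orthogonal projection of the freezing-surface state onto the c3-axis is closer to it than any BD classical state on the c2-axis. -/
open Matrix Kronecker
open scoped ComplexOrder

noncomputable section

/-- 2×2 complex matrices (single-qubit operators). -/
abbrev Mat2 := Matrix (Fin 2) (Fin 2) ℂ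

/-- 4×4 complex matrices (two-qubit operators), indexed by `Fin 2 × Fin 2`. -/
abbrev Mat4 := Matrix (Fin 2 × Fin 2) (Fin 2 × Fin 2) ℂ

/-- Pauli matrix σ₁ (x). -/
def σ1 : Mat2 := !![0, 1; 1, 0]

/-- Pauli matrix σ₂ (y). -/
def σ2 : Mat2 := !![0, -Complex.I; Complex.I, 0]

/-- Pauli matrix σ₃ (z). -/
def σ3 : Mat2 := !![1, 0; 0, -1]

/-- The Bell-diagonal state ρ(c1,c2,c3) = (1/4)(I₄ + c1 σ₁⊗σ₁ + c2 σ₂⊗σ₂ + c3 σ₃⊗σ₃). -/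
def BD (c1 c2 c3 : ℝ) : Mat4 :=
  (1 / 4 : ℂ) • ((1 : Mat4) + (c1 : ℂ) • (σ1 ⊗ₖ σ1) + (c2 : ℂ) • (σ2 ⊗ₖ σ2)
    + (c3 : ℂ) • (σ3 ⊗ₖ σ3))

/-- A two-qubit density matrix: positive semidefinite with unit trace. -/
def IsDensityMatrix (ρ : Mat4) : Prop := ρ.PosSemidef ∧ ρ.trace = 1

/-- A CPTP map given by finitely many Kraus operators. -/
def IsCPTP (Λ : Mat4 → Mat4) : Prop :=
  ∃ (n : ℕ) (K : Fin n → Mat4),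
    (∑ i, (K i)ᴴ * K i) = 1 ∧ ∀ X, Λ X = ∑ i, K i * X * (K i)ᴴ

/-- A distance `D` is contractive if it contracts under every CPTP map. -/
def Contractive (D : Mat4 → Mat4 → ℝ) : Prop :=
  ∀ Λ : Mat4 → Mat4, IsCPTP Λ → ∀ ρ σ : Mat4,
    IsDensityMatrix ρ → IsDensityMatrix σ → D (Λ ρ) (Λ σ) ≤ D ρ σ

/-- A distance `D` is invariant under transposition. -/
def TransposeInvariant (D : Mat4 → Mat4 → ℝ) : Prop :=
  ∀ ρ σ : Mat4, IsDensityMatrix ρ → IsDensityMatrix σ → D ρᵀ σᵀ = D ρ σ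

/-- A distance `D` is jointly convex. -/
def JointlyConvex (D : Mat4 → Mat4 → ℝ) : Prop :=
  ∀ q : ℝ, 0 ≤ q → q ≤ 1 → ∀ ρ σ τ ς : Mat4,
    IsDensityMatrix ρ → IsDensityMatrix σ → IsDensityMatrix τ → IsDensityMatrix ς →
    D (q • ρ + (1 - q) • σ) (q • τ + (1 - q) • ς) ≤ q * D ρ τ + (1 - q) * D σ ς

/-- A classical-classical two-qubit state: ∑ᵢⱼ pᵢⱼ |aᵢ⟩⟨aᵢ| ⊗ |bⱼ⟩⟨bⱼ| with (pᵢⱼ) a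
probability distribution and {aᵢ}, {bⱼ} orthonormal bases of ℂ². -/
def IsClassical (χ : Mat4) : Prop :=
  ∃ (p : Fin 2 → Fin 2 → ℝ) (a b : Fin 2 → Fin 2 → ℂ),
    (∀ i j, 0 ≤ p i j) ∧ (∑ i, ∑ j, p i j = 1) ∧
    (∀ i i', ∑ k, (starRingEnd ℂ) (a i k) * a i' k = if i = i' then 1 else 0) ∧
    (∀ j j', ∑ k, (starRingEnd ℂ) (b j k) * b j' k = if j = j' then 1 else 0) ∧
    χ = ∑ i, ∑ j, (p i j : ℂ) •
      (Matrix.vecMulVec (a i) (star (a i)) ⊗ₖ Matrix.vecMulVec (b j) (star (b j)))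

/-- Membership in the tetrahedron of Bell-diagonal states. -/
def InTetra (c : ℝ × ℝ × ℝ) : Prop :=
  c ∈ convexHull ℝ
    ({((1 : ℝ), (-1 : ℝ), (1 : ℝ)), ((-1 : ℝ), (1 : ℝ), (1 : ℝ)),
      ((1 : ℝ), (1 : ℝ), (-1 : ℝ)), ((-1 : ℝ), (-1 : ℝ), (-1 : ℝ))} : Set (ℝ × ℝ × ℝ))

/-- Geometric discord: distance to the set of classical states. -/
def QD (D : Mat4 → Mat4 → ℝ) (ρ : Mat4) : ℝ :=
  sInf {x : ℝ | ∃ χ : Mat4, IsClassical χ ∧ x = D ρ χ}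

/-- The Pauli matrices, indexed. -/
def pauli : Fin 3 → Mat2 := ![σ1, σ2, σ3]

/-!
Measure in the Bell basis, keep the first label `s` and redraw the second label from the
distribution `((1 + c₃)/2, (1 - c₃)/2)`. The Bell weights of `ρ(a, b, c)` sum over the second
label to `(1 ± a)/4`, so this channel sends every Bell-diagonal state `ρ(a, b, c)` to
`ρ(a, -a c₃, c₃)`, whose weights are the product `(1 ± a)(1 ± c₃)/8`. Hence it fixes
`ρ(c₁, -c₁c₃, c₃)` and maps `ρ(0, y, 0)` to `ρ(0, 0, c₃)`, and contractivity of `D` gives the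
inequality.
-/

section KrausMap

variable {κ m : Type*} [Fintype κ] [Fintype m]

def krausMap (K : κ → Matrix m m ℂ) (X : Matrix m m ℂ) : Matrix m m ℂ :=
  ∑ k, K k * X * (K k)ᴴ

theorem isCPTP_krausMap {K : κ → Mat4} (hK : ∑ k, (K k)ᴴ * K k = 1) : IsCPTP (krausMap K) := by
  let e := Fintype.equivFin κ
  refine ⟨Fintype.card κ, K ∘ e.symm, ?_, fun X => ?_⟩
  · rw [← hK, ← e.symm.sum_comp]; rfl
  · rw [krausMap, ← e.symm.sum_comp]; rfl

end KrausMap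

theorem vecMulVec_mul_vecMulVec_eq_smul {α m : Type*} [CommSemiring α] [Fintype m]
    (a b c d : m → α) : vecMulVec a b * vecMulVec c d = (b ⬝ᵥ c) • vecMulVec a d := by
  rw [vecMulVec_mul_vecMulVec, vecMulVec_smul]

section MeasurePrepare

variable {ι m : Type*} {v : ι → m → ℂ} {N : ℝ} {T : ι → ι → ℝ}

def measurePrepareKraus (v : ι → m → ℂ) (N : ℝ) (T : ι → ι → ℝ) (k : ι × ι) : Matrix m m ℂ :=
  ((√(T k.1 k.2) / N : ℝ) : ℂ) • vecMulVec (v k.2) (star (v k.1))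

theorem conjTranspose_measurePrepareKraus (k : ι × ι) :
    (measurePrepareKraus v N T k)ᴴ =
      ((√(T k.1 k.2) / N : ℝ) : ℂ) • vecMulVec (v k.1) (star (v k.2)) := by
  simp [measurePrepareKraus, conjTranspose_smul]

variable [DecidableEq ι] [Fintype m]

theorem measurePrepareKraus_conj_vecMulVec
    (horth : ∀ i j, star (v i) ⬝ᵥ v j = if i = j then (N : ℂ) else 0) (hN : N ≠ 0)
    (hT : ∀ i j, 0 ≤ T i j) (k : ι × ι) (l : ι) :
    measurePrepareKraus v N T k * vecMulVec (v l) (star (v l)) * (measurePrepareKraus v N T k)ᴴ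
      = if k.1 = l then (T k.1 k.2 : ℂ) • vecMulVec (v k.2) (star (v k.2)) else 0 := by
  obtain ⟨i, j⟩ := k
  rw [conjTranspose_measurePrepareKraus, measurePrepareKraus, smul_mul_assoc, mul_smul_comm,
    smul_mul_assoc, vecMulVec_mul_vecMulVec_eq_smul, smul_mul_assoc,
    vecMulVec_mul_vecMulVec_eq_smul]
  by_cases h : i = l
  · subst h
    simp only [horth, if_true, smul_smul]
    congr 1
    have hs : (√(T i j) : ℂ) * √(T i j) = T i j := by exact_mod_cast Real.mul_self_sqrt (hT i j)
    push_cast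
    field_simp
    linear_combination hs
  · simp [horth, h, Ne.symm h]

variable [Fintype ι] [DecidableEq m]

theorem sum_conjTranspose_mul_measurePrepareKraus
    (horth : ∀ i j, star (v i) ⬝ᵥ v j = if i = j then (N : ℂ) else 0)
    (hcomplete : ∑ i, vecMulVec (v i) (star (v i)) = (N : ℂ) • 1) (hN : N ≠ 0)
    (hT : ∀ i j, 0 ≤ T i j) (hrow : ∀ i, ∑ j, T i j = 1) :
    ∑ k, (measurePrepareKraus v N T k)ᴴ * measurePrepareKraus v N T k = 1 := by
  have hk : ∀ k : ι × ι, (measurePrepareKraus v N T k)ᴴ * measurePrepareKraus v N T k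
      = ((T k.1 k.2 / N : ℝ) : ℂ) • vecMulVec (v k.1) (star (v k.1)) := by
    rintro ⟨i, j⟩
    rw [conjTranspose_measurePrepareKraus, measurePrepareKraus, smul_mul_smul_comm,
      vecMulVec_mul_vecMulVec_eq_smul, horth, if_pos rfl, smul_smul]
    congr 1
    push_cast
    rw [← sq, div_pow, ← Complex.ofReal_pow, Real.sq_sqrt (hT i j)]
    field_simp
  simp only [hk, Fintype.sum_prod_type, ← Finset.sum_smul, ← Complex.ofReal_sum,
    ← Finset.sum_div, hrow]
  rw [← Finset.smul_sum, hcomplete, smul_smul]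
  simp [hN]

theorem krausMap_measurePrepareKraus
    (horth : ∀ i j, star (v i) ⬝ᵥ v j = if i = j then (N : ℂ) else 0) (hN : N ≠ 0)
    (hT : ∀ i j, 0 ≤ T i j) (p : ι → ℝ) :
    krausMap (measurePrepareKraus v N T) (∑ i, (p i : ℂ) • vecMulVec (v i) (star (v i)))
      = ∑ j, ((∑ i, p i * T i j : ℝ) : ℂ) • vecMulVec (v j) (star (v j)) := by
  simp only [krausMap, Finset.mul_sum, Finset.sum_mul, mul_smul_comm, smul_mul_assoc,
    measurePrepareKraus_conj_vecMulVec horth hN hT, smul_ite, smul_zero, Finset.sum_ite_eq,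
    Finset.mem_univ, if_true, Fintype.sum_prod_type]
  rw [Finset.sum_comm]
  simp only [Complex.ofReal_sum, Complex.ofReal_mul, Finset.sum_smul, smul_smul]

end MeasurePrepare

section Bell

/-- The unnormalised Bell vectors Φ⁺, Ψ⁺, Φ⁻, Ψ⁻, as vectorisations of `1`, `σ₁`, `σ₃`, `σ₃σ₁`. -/
def bell (k : Fin 2 × Fin 2) (p : Fin 2 × Fin 2) : ℂ :=
  (![![1, σ1], ![σ3, σ3 * σ1]] k.1 k.2 : Mat2) p.1 p.2

def bellWeight (a b c : ℝ) (k : Fin 2 × Fin 2) : ℝ :=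
  ![![(1 + a - b + c) / 8, (1 + a + b - c) / 8], ![(1 - a + b + c) / 8, (1 - a - b - c) / 8]]
    k.1 k.2

theorem star_bell_dotProduct_bell (i j : Fin 2 × Fin 2) :
    star (bell i) ⬝ᵥ bell j = if i = j then ((2 : ℝ) : ℂ) else 0 := by
  obtain ⟨s, t⟩ := i
  obtain ⟨s', t'⟩ := j
  fin_cases s <;> fin_cases t <;> fin_cases s' <;> fin_cases t' <;>
    simp [bell, σ1, σ3, dotProduct, Fintype.sum_prod_type] <;> norm_num

theorem sum_vecMulVec_bell : ∑ i, vecMulVec (bell i) (star (bell i)) = ((2 : ℝ) : ℂ) • 1 := by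
  ext ⟨i, j⟩ ⟨k, l⟩
  fin_cases i <;> fin_cases j <;> fin_cases k <;> fin_cases l <;>
    simp [bell, σ1, σ3, vecMulVec_apply, Fintype.sum_prod_type, one_apply] <;> norm_num

theorem BD_eq_sum_bellWeight (a b c : ℝ) :
    BD a b c = ∑ k, (bellWeight a b c k : ℂ) • vecMulVec (bell k) (star (bell k)) := by
  ext ⟨i, j⟩ ⟨k, l⟩
  fin_cases i <;> fin_cases j <;> fin_cases k <;> fin_cases l <;>
    simp [BD, bell, bellWeight, σ1, σ2, σ3, Fintype.sum_prod_type, vecMulVec_apply,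
      kroneckerMap_apply, one_apply] <;> ring

theorem trace_BD (a b c : ℝ) : (BD a b c).trace = 1 := by
  simp [BD, trace_kronecker, trace_fin_two, σ1, σ2, σ3]

theorem isDensityMatrix_BD {a b c : ℝ} (h : ∀ k, 0 ≤ bellWeight a b c k) :
    IsDensityMatrix (BD a b c) := by
  refine ⟨?_, trace_BD a b c⟩
  rw [BD_eq_sum_bellWeight]
  exact posSemidef_sum _ fun k _ =>
    (posSemidef_vecMulVec_self_star _).smul (Complex.zero_le_real.mpr (h k))

end Bell

section Resample

def binaryDist (c : ℝ) : Fin 2 → ℝ := ![(1 + c) / 2, (1 - c) / 2]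

theorem binaryDist_nonneg {c : ℝ} (hc : c ∈ Set.Icc (-1 : ℝ) 1) (s : Fin 2) :
    0 ≤ binaryDist c s := by
  obtain ⟨hl, hu⟩ := hc
  fin_cases s <;> simp [binaryDist] <;> linarith

theorem sum_binaryDist (c : ℝ) : ∑ s, binaryDist c s = 1 := by
  simp [binaryDist, Fin.sum_univ_two]
  ring

theorem sum_bellWeight_eq_binaryDist (a b c : ℝ) (s : Fin 2) :
    ∑ t, bellWeight a b c (s, t) = binaryDist a s / 2 := by
  fin_cases s <;> simp [bellWeight, binaryDist, Fin.sum_univ_two] <;> ring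

theorem bellWeight_eq_binaryDist_mul (a c : ℝ) (k : Fin 2 × Fin 2) :
    bellWeight a (-(a * c)) c k = binaryDist a k.1 / 2 * binaryDist c k.2 := by
  obtain ⟨s, t⟩ := k
  fin_cases s <;> fin_cases t <;> simp [bellWeight, binaryDist] <;> ring

def resampleSnd (r : ℝ) (i j : Fin 2 × Fin 2) : ℝ :=
  if i.1 = j.1 then binaryDist r j.2 else 0

theorem sum_mul_resampleSnd (r : ℝ) (p : Fin 2 × Fin 2 → ℝ) (j : Fin 2 × Fin 2) :
    ∑ i, p i * resampleSnd r i j = (∑ t, p (j.1, t)) * binaryDist r j.2 := by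
  simp only [resampleSnd, mul_ite, mul_zero, Fintype.sum_prod_type]
  rw [Finset.sum_eq_single_of_mem j.1 (Finset.mem_univ _) fun s _ hs => by simp [hs],
    Finset.sum_mul]
  simp

theorem resampleSnd_nonneg {r : ℝ} (hr : r ∈ Set.Icc (-1 : ℝ) 1) (i j : Fin 2 × Fin 2) :
    0 ≤ resampleSnd r i j := by
  unfold resampleSnd
  split_ifs
  exacts [binaryDist_nonneg hr _, le_rfl]

def bellResampleKraus (r : ℝ) : (Fin 2 × Fin 2) × (Fin 2 × Fin 2) → Mat4 :=
  measurePrepareKraus bell 2 (resampleSnd r)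

theorem sum_conjTranspose_mul_bellResampleKraus {r : ℝ} (hr : r ∈ Set.Icc (-1 : ℝ) 1) :
    ∑ k, (bellResampleKraus r k)ᴴ * bellResampleKraus r k = 1 := by
  refine sum_conjTranspose_mul_measurePrepareKraus star_bell_dotProduct_bell
    sum_vecMulVec_bell two_ne_zero (resampleSnd_nonneg hr) fun i => ?_
  simpa [resampleSnd, Fintype.sum_prod_type] using sum_binaryDist r

theorem krausMap_bellResampleKraus_BD {r : ℝ} (hr : r ∈ Set.Icc (-1 : ℝ) 1) (a b c : ℝ) :
    krausMap (bellResampleKraus r) (BD a b c) = BD a (-(a * r)) r := by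
  rw [BD_eq_sum_bellWeight, BD_eq_sum_bellWeight, bellResampleKraus,
    krausMap_measurePrepareKraus star_bell_dotProduct_bell two_ne_zero (resampleSnd_nonneg hr)]
  simp only [sum_mul_resampleSnd, sum_bellWeight_eq_binaryDist, bellWeight_eq_binaryDist_mul]

end Resample

theorem isDensityMatrix_BD_freezing {a c : ℝ} (ha : a ∈ Set.Icc (-1 : ℝ) 1)
    (hc : c ∈ Set.Icc (-1 : ℝ) 1) : IsDensityMatrix (BD a (-(a * c)) c) :=
  isDensityMatrix_BD fun k => by
    rw [bellWeight_eq_binaryDist_mul]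
    exact mul_nonneg (div_nonneg (binaryDist_nonneg ha _) zero_le_two) (binaryDist_nonneg hc _)

theorem isDensityMatrix_BD_c2_axis {b : ℝ} (hb : b ∈ Set.Icc (-1 : ℝ) 1) :
    IsDensityMatrix (BD 0 b 0) :=
  isDensityMatrix_BD fun ⟨s, t⟩ => by
    obtain ⟨hl, hu⟩ := hb
    fin_cases s <;> fin_cases t <;> simp [bellWeight] <;> linarith

/-- the projection onto the c3-axis is closer to the freezing-surface state
than any BD classical state on the c2-axis. -/
theorem c3_projection_closer_than_c2_axis
    (D : Mat4 → Mat4 → ℝ) (hD : Contractive D)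
    (c1 c3 y : ℝ) (hc1 : c1 ∈ Set.Icc (-1 : ℝ) 1) (hc3 : c3 ∈ Set.Icc (-1 : ℝ) 1)
    (hy : y ∈ Set.Icc (-1 : ℝ) 1) :
    D (BD c1 (-(c1 * c3)) c3) (BD 0 0 c3) ≤ D (BD c1 (-(c1 * c3)) c3) (BD 0 y 0) := by
  have hΛ : IsCPTP (krausMap (bellResampleKraus c3)) :=
    isCPTP_krausMap (sum_conjTranspose_mul_bellResampleKraus hc3)
  have hcontract :=
    hD _ hΛ _ _ (isDensityMatrix_BD_freezing hc1 hc3) (isDensityMatrix_BD_c2_axis hy)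
  rwa [krausMap_bellResampleKraus_BD hc3, krausMap_bellResampleKraus_BD hc3, zero_mul,
    neg_zero] at hcontract
end
end

section
/- Let D be a contractive distance on two-qubit density matrices. Then for every q ∈ [0,1] and every c3 ∈ [-1,1], D(ρ(0,0,q·c3), ρ(0,0,0)) ≤ D(ρ(0,0,c3), ρ(0,0,0)), where ρ(0,0,0) = I4/4 is the maximally mixed state. -/
open Matrix Kronecker
open scoped ComplexOrder

noncomputable section

lemma sq1 : σ1 * σ1 = (1 : Mat2) := by
  ext i j; fin_cases i <;> fin_cases j <;>
    simp [σ1, Matrix.mul_apply, Fin.sum_univ_two, Matrix.one_apply]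

lemma s131 : σ1 * σ3 * σ1 = -σ3 := by
  ext i j; fin_cases i <;> fin_cases j <;>
    simp [σ1, σ3, Matrix.mul_apply, Fin.sum_univ_two]

lemma s1H : σ1ᴴ = σ1 := by
  ext i j; fin_cases i <;> fin_cases j <;> simp [σ1]

def U : Mat4 := σ1 ⊗ₖ (1 : Mat2)

lemma UH : Uᴴ = U := by
  ext ⟨i,j⟩ ⟨k,l⟩
  fin_cases i <;> fin_cases j <;> fin_cases k <;> fin_cases l <;>
    simp [U, σ1, Matrix.one_apply]

lemma UU : U * U = 1 := by
  rw [U, ← Matrix.mul_kronecker_mul, sq1, mul_one, Matrix.one_kronecker_one]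

lemma BD00 (a : ℝ) : BD 0 0 a = (1/4:ℂ) • (1:Mat4) + ((a:ℂ)/4) • (σ3 ⊗ₖ σ3) := by
  unfold BD; push_cast; module

lemma U_BD_U (a : ℝ) : U * BD 0 0 a * U = BD 0 0 (-a) := by
  have h3 : U * (σ3 ⊗ₖ σ3) * U = -(σ3 ⊗ₖ σ3) := by
    rw [U, ← Matrix.mul_kronecker_mul, ← Matrix.mul_kronecker_mul, s131, one_mul,
      Matrix.mul_one]
    ext ⟨i,j⟩ ⟨k,l⟩; simp
  rw [BD00, BD00]
  rw [Matrix.mul_add, Matrix.add_mul, Matrix.mul_smul, Matrix.mul_smul, Matrix.smul_mul,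
    Matrix.smul_mul, mul_one, UU, h3]
  push_cast
  module

lemma BD_diag (a : ℝ) : BD 0 0 a
    = Matrix.diagonal (fun pr => (((1 + (if pr.1 = pr.2 then a else -a)) / 4 : ℝ) : ℂ)) := by
  unfold BD σ3
  ext ⟨i,j⟩ ⟨k,l⟩
  fin_cases i <;> fin_cases j <;> fin_cases k <;> fin_cases l <;>
    simp [Matrix.diagonal, Matrix.one_apply, Prod.ext_iff] <;> push_cast <;> ring

lemma BD_dm (a : ℝ) (h0 : -1 ≤ a) (h1 : a ≤ 1) : IsDensityMatrix (BD 0 0 a) := by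
  rw [BD_diag]
  constructor
  · refine Matrix.posSemidef_diagonal_iff.mpr fun i => ?_
    rw [Complex.zero_le_real]
    split <;> linarith
  · simp [Matrix.trace_diagonal, Fintype.sum_prod_type, Fin.sum_univ_two]
    push_cast; ring

lemma kraus_sum (p : ℝ) (hp0 : 0 ≤ p) (hp1 : p ≤ 1) :
    ((Real.sqrt (1-p) : ℂ) • (1:Mat4))ᴴ * ((Real.sqrt (1-p) : ℂ) • 1)
      + ((Real.sqrt p : ℂ) • U)ᴴ * ((Real.sqrt p : ℂ) • U) = 1 := by
  simp only [Matrix.conjTranspose_smul, Matrix.conjTranspose_one, UH, Complex.star_def,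
    Complex.conj_ofReal, Matrix.smul_mul, Matrix.mul_smul, UU, mul_one, smul_smul]
  rw [← Complex.ofReal_mul, ← Complex.ofReal_mul, Real.mul_self_sqrt (by linarith),
    Real.mul_self_sqrt hp0, ← add_smul]
  norm_num

lemma chan_BD (p a : ℝ) (hp0 : 0 ≤ p) (hp1 : p ≤ 1) :
    ((Real.sqrt (1-p) : ℂ) • (1:Mat4)) * BD 0 0 a * ((Real.sqrt (1-p) : ℂ) • 1)ᴴ
      + ((Real.sqrt p : ℂ) • U) * BD 0 0 a * ((Real.sqrt p : ℂ) • U)ᴴ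
      = BD 0 0 ((1 - 2*p) * a) := by
  simp only [Matrix.conjTranspose_smul, Matrix.conjTranspose_one, UH, Complex.star_def,
    Complex.conj_ofReal, Matrix.smul_mul, Matrix.mul_smul, mul_one, one_mul,
    Matrix.mul_one, Matrix.one_mul, smul_smul, U_BD_U]
  rw [← Complex.ofReal_mul, ← Complex.ofReal_mul, Real.mul_self_sqrt (by linarith),
    Real.mul_self_sqrt hp0]
  rw [BD00, BD00, BD00]
  push_cast
  module


/-- the distance from ρ(0,0,c3) to the maximally mixed state contracts when
c3 is scaled by q ∈ [0,1]. -/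
theorem distance_contracts_along_c3_axis
    (D : Mat4 → Mat4 → ℝ) (hD : Contractive D)
    (q c3 : ℝ) (hq : q ∈ Set.Icc (0 : ℝ) 1) (hc3 : c3 ∈ Set.Icc (-1 : ℝ) 1) :
    D (BD 0 0 (q * c3)) (BD 0 0 0) ≤ D (BD 0 0 c3) (BD 0 0 0) := by
  obtain ⟨hq0, hq1⟩ := hq
  obtain ⟨hc0, hc1⟩ := hc3
  set p : ℝ := (1 - q) / 2 with hp
  have hp0 : 0 ≤ p := by rw [hp]; linarith
  have hp1 : p ≤ 1 := by rw [hp]; linarith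
  set K : Fin 2 → Mat4 := ![(Real.sqrt (1-p) : ℂ) • 1, (Real.sqrt p : ℂ) • U] with hK
  set Λ : Mat4 → Mat4 := fun X => ∑ i, K i * X * (K i)ᴴ with hΛ
  have hC : IsCPTP Λ := by
    refine ⟨2, K, ?_, fun X => rfl⟩
    rw [Fin.sum_univ_two]
    simp only [hK, Matrix.cons_val_zero, Matrix.cons_val_one, Matrix.head_cons]
    exact kraus_sum p hp0 hp1
  have hmap : ∀ a : ℝ, Λ (BD 0 0 a) = BD 0 0 ((1 - 2*p) * a) := by
    intro a
    show ∑ i, K i * BD 0 0 a * (K i)ᴴ = _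
    rw [Fin.sum_univ_two]
    simp only [hK, Matrix.cons_val_zero, Matrix.cons_val_one, Matrix.head_cons]
    exact chan_BD p a hp0 hp1
  have key := hD Λ hC (BD 0 0 c3) (BD 0 0 0) (BD_dm c3 hc0 hc1)
    (BD_dm 0 (by norm_num) (by norm_num))
  rw [hmap, hmap] at key
  have e1 : (1 - 2*p) * c3 = q * c3 := by rw [hp]; ring
  have e2 : (1 - 2*p) * 0 = 0 := by ring
  rwa [e1, e2] at key
end
end

section
/- Let D be a contractive and transposition invariant distance on two-qubit density matrices. For any Bell-diagonal density matrix ρ = ρ(c1,c2,c3) and any two-qubit density matrix ς, define ς₋ = (σ2⊗σ2)·ςᵀ·(σ2⊗σ2) (which is again a two-qubit density matrix, obtained from ς by flipping the signs of both local Bloch vectors while keeping the correlation matrix; note that ρ₋ = ρ for Bell-diagonal ρ). Then D(ρ, ς₋) = D(ρ, ς). -/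
open Matrix Kronecker
open scoped ComplexOrder

noncomputable section

/-! A Bell-diagonal state `ρ` is fixed both by transposition and by conjugation with the
self-adjoint unitary `σ₂ ⊗ σ₂`. Transposition invariance of `D` replaces `ς` by `ςᵀ`; contractivity
under a unitary conjugation and under its inverse makes `D` invariant under that conjugation, which
replaces `ςᵀ` by `ς₋` while leaving `ρ` unchanged. -/

lemma σ2_mul_self : σ2 * σ2 = 1 := by
  ext i j
  fin_cases i <;> fin_cases j <;> simp [σ2, Matrix.mul_apply]

lemma σ2_mul_σ1_mul_σ2 : σ2 * σ1 * σ2 = -σ1 := by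
  ext i j
  fin_cases i <;> fin_cases j <;> simp [σ1, σ2, Matrix.mul_apply]

lemma σ2_mul_σ3_mul_σ2 : σ2 * σ3 * σ2 = -σ3 := by
  ext i j
  fin_cases i <;> fin_cases j <;> simp [σ2, σ3, Matrix.mul_apply]

lemma σ1_transpose : σ1ᵀ = σ1 := by
  ext i j
  fin_cases i <;> fin_cases j <;> simp [σ1]

lemma σ2_transpose : σ2ᵀ = -σ2 := by
  ext i j
  fin_cases i <;> fin_cases j <;> simp [σ2]

lemma σ3_transpose : σ3ᵀ = σ3 := by
  ext i j
  fin_cases i <;> fin_cases j <;> simp [σ3]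

lemma σ2_conjTranspose : σ2ᴴ = σ2 := by
  ext i j
  fin_cases i <;> fin_cases j <;> simp [σ2]

lemma neg_kronecker_neg {R l m n p : Type*} [Ring R] (A : Matrix l m R) (B : Matrix n p R) :
    (-A) ⊗ₖ (-B) = A ⊗ₖ B := by
  ext
  simp

section Kronecker

variable {R n : Type*} [CommRing R] {A U : Matrix n n R}

lemma kronecker_self_transpose_of_transpose_eq_neg (h : Aᵀ = -A) : (A ⊗ₖ A)ᵀ = A ⊗ₖ A := by
  rw [← kroneckerMap_transpose, h, neg_kronecker_neg]

variable [Fintype n]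

lemma kronecker_self_conj_of_conj_eq_neg (h : U * A * U = -A) :
    (U ⊗ₖ U) * (A ⊗ₖ A) * (U ⊗ₖ U) = A ⊗ₖ A := by
  rw [← mul_kronecker_mul, ← mul_kronecker_mul, h, neg_kronecker_neg]

end Kronecker

lemma σ2_kronecker_σ2_mem_unitaryGroup : σ2 ⊗ₖ σ2 ∈ unitaryGroup (Fin 2 × Fin 2) ℂ := by
  rw [mem_unitaryGroup_iff, star_eq_conjTranspose, conjTranspose_kronecker, σ2_conjTranspose,
    ← mul_kronecker_mul, σ2_mul_self, one_kronecker_one]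

lemma σ2_kronecker_σ2_conj_BD (c1 c2 c3 : ℝ) :
    (σ2 ⊗ₖ σ2) * BD c1 c2 c3 * (σ2 ⊗ₖ σ2) = BD c1 c2 c3 := by
  have hU : (σ2 ⊗ₖ σ2) * (σ2 ⊗ₖ σ2) = 1 := by
    rw [← mul_kronecker_mul, σ2_mul_self, one_kronecker_one]
  simp only [BD, Matrix.mul_smul, Matrix.smul_mul, Matrix.mul_add, Matrix.add_mul, Matrix.mul_one,
    hU, kronecker_self_conj_of_conj_eq_neg σ2_mul_σ1_mul_σ2,
    kronecker_self_conj_of_conj_eq_neg σ2_mul_σ3_mul_σ2, Matrix.one_mul]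

lemma BD_transpose (c1 c2 c3 : ℝ) : (BD c1 c2 c3)ᵀ = BD c1 c2 c3 := by
  simp only [BD, transpose_smul, transpose_add, transpose_one,
    kronecker_self_transpose_of_transpose_eq_neg σ2_transpose, ← kroneckerMap_transpose,
    σ1_transpose, σ3_transpose]

lemma BD_trace (c1 c2 c3 : ℝ) : (BD c1 c2 c3).trace = 1 := by
  simp [BD, trace_kronecker, σ1, σ2, σ3, Matrix.trace_fin_two]

lemma BD_affine_combination (a b : ℝ) (hab : a + b = 1) (x1 x2 x3 y1 y2 y3 : ℝ) :
    BD (a * x1 + b * y1) (a * x2 + b * y2) (a * x3 + b * y3)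
      = (a : ℂ) • BD x1 x2 x3 + (b : ℂ) • BD y1 y2 y3 := by
  have hab' : (a : ℂ) + b = 1 := by exact_mod_cast hab
  simp only [BD]
  push_cast
  match_scalars <;> first | ring1 | linear_combination (-1 / 4 : ℂ) * hab'

lemma convex_setOf_posSemidef_BD :
    Convex ℝ {c : ℝ × ℝ × ℝ | (BD c.1 c.2.1 c.2.2).PosSemidef} := by
  intro x hx y hy a b ha hb hab
  have h := BD_affine_combination a b hab x.1 x.2.1 x.2.2 y.1 y.2.1 y.2.2
  simp only [Set.mem_ofPred_eq, Prod.fst_add, Prod.snd_add, Prod.smul_fst, Prod.smul_snd,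
    smul_eq_mul, h] at hx hy ⊢
  exact (hx.smul (Complex.zero_le_real.2 ha)).add (hy.smul (Complex.zero_le_real.2 hb))

lemma posSemidef_BD_of_eq_half_vecMulVec {e1 e2 e3 : ℝ} (ψ : Fin 2 × Fin 2 → ℂ)
    (h : BD e1 e2 e3 = (2⁻¹ : ℂ) • vecMulVec ψ (star ψ)) : (BD e1 e2 e3).PosSemidef :=
  h ▸ (posSemidef_vecMulVec_self_star ψ).smul (inv_nonneg.2 (by norm_num))

-- The vertices are the Bell states `ψψ† / 2`, `ψ ∈ {(1, 0, 0, ±1), (0, 1, ±1, 0)}`.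
lemma posSemidef_BD_of_mem_vertices {c : ℝ × ℝ × ℝ}
    (hc : c ∈ ({(1, -1, 1), (-1, 1, 1), (1, 1, -1), (-1, -1, -1)} : Set (ℝ × ℝ × ℝ))) :
    (BD c.1 c.2.1 c.2.2).PosSemidef := by
  simp only [Set.mem_insert_iff, Set.mem_singleton_iff] at hc
  rcases hc with rfl | rfl | rfl | rfl
  on_goal 1 => apply posSemidef_BD_of_eq_half_vecMulVec (Function.uncurry ![![1, 0], ![0, 1]])
  on_goal 2 => apply posSemidef_BD_of_eq_half_vecMulVec (Function.uncurry ![![1, 0], ![0, -1]])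
  on_goal 3 => apply posSemidef_BD_of_eq_half_vecMulVec (Function.uncurry ![![0, 1], ![1, 0]])
  on_goal 4 => apply posSemidef_BD_of_eq_half_vecMulVec (Function.uncurry ![![0, 1], ![-1, 0]])
  all_goals
    ext ⟨a, b⟩ ⟨c, d⟩
    fin_cases a <;> fin_cases b <;> fin_cases c <;> fin_cases d <;>
      simp [BD, σ1, σ2, σ3, vecMulVec_apply] <;> norm_num

lemma isDensityMatrix_BD_s14 {c1 c2 c3 : ℝ} (hc : InTetra (c1, c2, c3)) :
    IsDensityMatrix (BD c1 c2 c3) := by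
  refine ⟨(convexHull_min (fun _ hv => posSemidef_BD_of_mem_vertices hv)
    convex_setOf_posSemidef_BD hc :), BD_trace c1 c2 c3⟩

lemma IsDensityMatrix.transpose {ρ : Mat4} (hρ : IsDensityMatrix ρ) : IsDensityMatrix ρᵀ :=
  ⟨hρ.1.transpose, by rw [trace_transpose, hρ.2]⟩

lemma IsDensityMatrix.unitary_conj {ρ U : Mat4} (hρ : IsDensityMatrix ρ)
    (hU : U ∈ unitaryGroup (Fin 2 × Fin 2) ℂ) : IsDensityMatrix (U * ρ * Uᴴ) :=
  ⟨hρ.1.mul_mul_conjTranspose_same U, by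
    rw [trace_mul_cycle, ← star_eq_conjTranspose, Unitary.star_mul_self_of_mem hU, one_mul, hρ.2]⟩

lemma isCPTP_unitary_conj {U : Mat4} (hU : U ∈ unitaryGroup (Fin 2 × Fin 2) ℂ) :
    IsCPTP (fun X => U * X * Uᴴ) := by
  have hUU : Uᴴ * U = 1 := Unitary.star_mul_self_of_mem hU
  exact ⟨1, fun _ => U, by simpa using hUU, fun X => by simp⟩

lemma Contractive.unitary_conj_eq {D : Mat4 → Mat4 → ℝ} (hD : Contractive D) {U ρ σ : Mat4}
    (hU : U ∈ unitaryGroup (Fin 2 × Fin 2) ℂ) (hρ : IsDensityMatrix ρ) (hσ : IsDensityMatrix σ) :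
    D (U * ρ * Uᴴ) (U * σ * Uᴴ) = D ρ σ := by
  have hU' : Uᴴ ∈ unitaryGroup (Fin 2 × Fin 2) ℂ := Unitary.star_mem hU
  have hundo : ∀ X : Mat4, Uᴴ * (U * X * Uᴴ) * Uᴴᴴ = X := fun X => by
    have hUU : Uᴴ * U = 1 := Unitary.star_mul_self_of_mem hU
    simp only [conjTranspose_conjTranspose, ← mul_assoc, hUU, one_mul]
    rw [mul_assoc, hUU, mul_one]
  refine le_antisymm (hD _ (isCPTP_unitary_conj hU) ρ σ hρ hσ) ?_
  simpa only [hundo] using hD _ (isCPTP_unitary_conj hU') _ _ (hρ.unitary_conj hU)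
    (hσ.unitary_conj hU)

/-- flipping the signs of both local Bloch vectors of ς (via
ς₋ = (σ₂⊗σ₂)·ςᵀ·(σ₂⊗σ₂)) leaves the distance to any Bell-diagonal state unchanged. -/
theorem distance_invariant_under_local_Bloch_flip
    (D : Mat4 → Mat4 → ℝ) (hD : Contractive D) (hT : TransposeInvariant D)
    (c1 c2 c3 : ℝ) (hc : InTetra (c1, c2, c3)) (ς : Mat4) (hς : IsDensityMatrix ς) :
    D (BD c1 c2 c3) ((σ2 ⊗ₖ σ2) * ςᵀ * (σ2 ⊗ₖ σ2)) = D (BD c1 c2 c3) ς := by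
  have hρ := isDensityMatrix_BD_s14 hc
  have hU := σ2_kronecker_σ2_mem_unitaryGroup
  have hUU : (σ2 ⊗ₖ σ2)ᴴ = σ2 ⊗ₖ σ2 := by rw [conjTranspose_kronecker, σ2_conjTranspose]
  calc D (BD c1 c2 c3) ((σ2 ⊗ₖ σ2) * ςᵀ * (σ2 ⊗ₖ σ2))
      = D ((σ2 ⊗ₖ σ2) * BD c1 c2 c3 * (σ2 ⊗ₖ σ2)ᴴ) ((σ2 ⊗ₖ σ2) * ςᵀ * (σ2 ⊗ₖ σ2)ᴴ) := by
        rw [hUU, σ2_kronecker_σ2_conj_BD]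
    _ = D (BD c1 c2 c3)ᵀ ςᵀ := by rw [hD.unitary_conj_eq hU hρ hς.transpose, BD_transpose]
    _ = D (BD c1 c2 c3) ς := hT _ _ hρ hς
end
end
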